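/- Fix R > 0 and an integer m ≥ 0. For each n ≥ 1, let (x₁,…,x_n) be uniformly distributed on the closed Euclidean ball {x ∈ ℝ^n : ∑ x_k² ≤ nR²}. Then E[x₁^{2m}] = n^m·R^{2m}·Γ(m + 1/2)·Γ(1 + n/2) / ( √π · Γ(m + 1 + n/2) ), and lim_{n→∞} E[x₁^{2m}] = (2m−1)!!·R^{2m}, where (2m−1)!! = 1·3·5⋯(2m−1) (with (−1)!! = 1). Moreover all odd moments vanish: E[x₁^{2m+1}] = 0. -/

import Mathlib

open MeasureTheory ProbabilityTheory Filter Real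

/-- The closed Euclidean ball `{x ∈ ℝⁿ : ∑ x_k² ≤ n R²}`. -/
def scaledBall (n : ℕ) (R : ℝ) : Set (Fin n → ℝ) :=
  {x | ∑ k, (x k) ^ 2 ≤ n * R ^ 2}

/-- The uniform probability measure (normalized Lebesgue measure) on the ball
`{x ∈ ℝⁿ : ∑ x_k² ≤ n R²}`. -/
noncomputable def scaledBallUnif (n : ℕ) (R : ℝ) : Measure (Fin n → ℝ) :=
  (volume (scaledBall n R))⁻¹ • volume.restrict (scaledBall n R)

/-!
Splitting off the coordinate `x i` (Fubini), the slice of the ball `∑ x_j² ≤ c` in `ℝⁿ`,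
`n = k + 1`, at `x i = t` is a `k`-dimensional ball of radius `√(c - t²)`, so `x i` has density
proportional to `(c - t²)^(k/2)` on `[-√c, √c]`. This density is even, which kills the odd
moments; for the even ones the substitution `s = t²` followed by `s = c u` gives the Beta integral
`B(m + 1/2, k/2 + 1)`, and dividing by the volume of the ball yields the closed form. For
`c = n R²`, with `Γ(m + 1/2) = (2m - 1)‼ √π / 2^m` and
`Γ(1 + n/2 + m) = Γ(1 + n/2) ∏_{j<m} (1 + n/2 + j)`, the `2m`-th moment equals
`(2m - 1)‼ R^(2m) ∏_{j<m} n / (n + 2j + 2)`, whose factors tend to `1`.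
-/

open Set

section SumSqBall

variable {ι : Type*} [Fintype ι]

theorem measurableSet_sum_sq_le (c : ℝ) : MeasurableSet {x : ι → ℝ | ∑ i, x i ^ 2 ≤ c} :=
  measurableSet_le (by fun_prop) measurable_const

theorem isCompact_sum_sq_le (c : ℝ) : IsCompact {x : ι → ℝ | ∑ i, x i ^ 2 ≤ c} := by
  refine Metric.isCompact_of_isClosed_isBounded (isClosed_le (by fun_prop) continuous_const)
    ((Metric.isBounded_closedBall (x := 0) (r := √c)).subset fun x hx => ?_)
  rw [mem_closedBall_zero_iff, pi_norm_le_iff_of_nonneg (sqrt_nonneg c)]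
  exact fun i => abs_le_sqrt
    ((Finset.single_le_sum (fun j _ => sq_nonneg (x j)) (Finset.mem_univ i)).trans hx)

theorem volume_sum_sq_le {c : ℝ} (hc : 0 ≤ c) :
    volume {x : ι → ℝ | ∑ i, x i ^ 2 ≤ c} =
      ENNReal.ofReal
        (√c ^ Fintype.card ι * (√π ^ Fintype.card ι / Gamma (Fintype.card ι / 2 + 1))) := by
  cases isEmpty_or_nonempty ι
  · simp [hc, volume_pi]
  have hball : WithLp.ofLp ⁻¹' {x : ι → ℝ | ∑ i, x i ^ 2 ≤ c} =
      Metric.closedBall (0 : EuclideanSpace ℝ ι) √c := by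
    rw [EuclideanSpace.closedBall_zero_eq _ (sqrt_nonneg c), sq_sqrt hc]
    rfl
  rw [← (PiLp.volume_preserving_ofLp ι).measure_preimage
    (measurableSet_sum_sq_le c).nullMeasurableSet, hball, EuclideanSpace.volume_closedBall,
    ← ENNReal.ofReal_pow (sqrt_nonneg c), ← ENNReal.ofReal_mul (by positivity)]

theorem measureReal_sum_sq_le (c : ℝ) :
    volume.real {x : ι → ℝ | ∑ i, x i ^ 2 ≤ c} =
      (if 0 ≤ c then √c ^ Fintype.card ι else 0) *
        (√π ^ Fintype.card ι / Gamma (Fintype.card ι / 2 + 1)) := by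
  split_ifs with hc
  · rw [measureReal_def, volume_sum_sq_le hc, ENNReal.toReal_ofReal (by positivity)]
  · have hempty : {x : ι → ℝ | ∑ i, x i ^ 2 ≤ c} = ∅ :=
      eq_empty_of_forall_notMem fun x hx => hc ((by positivity : (0:ℝ) ≤ ∑ i, x i ^ 2).trans hx)
    simp [hempty]

end SumSqBall

theorem setIntegral_sum_sq_le_comp_eval {k : ℕ} (i : Fin (k + 1)) {f : ℝ → ℝ} (hf : Continuous f)
    (c : ℝ) :
    ∫ x in {x : Fin (k + 1) → ℝ | ∑ j, x j ^ 2 ≤ c}, f (x i) =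
      ∫ t, f t * volume.real {y : Fin k → ℝ | ∑ j, y j ^ 2 ≤ c - t ^ 2} := by
  set e := MeasurableEquiv.piFinSuccAbove (fun _ : Fin (k + 1) => ℝ) i
  have he : MeasurePreserving e := volume_preserving_piFinSuccAbove _ i
  set S : Set (ℝ × (Fin k → ℝ)) := {p | p.1 ^ 2 + ∑ j, p.2 j ^ 2 ≤ c}
  have hS : MeasurableSet S := measurableSet_le (by fun_prop) measurable_const
  have hpre : e ⁻¹' S = {x | ∑ j, x j ^ 2 ≤ c} := by
    ext x
    simp [S, e, Fin.sum_univ_succAbove _ i, Fin.removeNth_apply]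
  have hint : IntegrableOn (fun p : ℝ × (Fin k → ℝ) => f p.1) S := by
    rw [← he.integrableOn_comp_preimage e.measurableEmbedding, hpre]
    exact (hf.comp (continuous_apply i)).continuousOn.integrableOn_compact (isCompact_sum_sq_le c)
  calc ∫ x in {x : Fin (k + 1) → ℝ | ∑ j, x j ^ 2 ≤ c}, f (x i)
      = ∫ x in e ⁻¹' S, f (e x).1 := by rw [hpre]; rfl
    _ = ∫ p, S.indicator (fun p => f p.1) p := by
      rw [he.setIntegral_preimage_emb e.measurableEmbedding (fun p => f p.1), integral_indicator hS]
    _ = ∫ t, ∫ y, S.indicator (fun p => f p.1) (t, y) :=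
      integral_prod _ ((integrable_indicator_iff hS).2 hint)
    _ = _ := by
      congr 1 with t
      have hsec : ∀ y, S.indicator (fun p => f p.1) (t, y) =
          {y : Fin k → ℝ | ∑ j, y j ^ 2 ≤ c - t ^ 2}.indicator (fun _ => f t) y := by
        intro y
        simp only [indicator, S, mem_ofPred_eq, le_sub_iff_add_le']
      simp_rw [hsec]
      rw [integral_indicator_const _ (measurableSet_sum_sq_le _), smul_eq_mul, mul_comm]

theorem integral_rpow_mul_one_sub_rpow {a b : ℝ} (ha : 0 < a) (hb : 0 < b) :
    ∫ u in (0 : ℝ)..1, u ^ (a - 1) * (1 - u) ^ (b - 1) = Gamma a * Gamma b / Gamma (a + b) := by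
  have hbeta : Complex.betaIntegral a b =
      ((∫ u in (0 : ℝ)..1, u ^ (a - 1) * (1 - u) ^ (b - 1) : ℝ) : ℂ) := by
    rw [Complex.betaIntegral, ← intervalIntegral.integral_ofReal]
    refine intervalIntegral.integral_congr fun u hu => ?_
    rw [uIcc_of_le zero_le_one] at hu
    push_cast [Complex.ofReal_cpow hu.1, Complex.ofReal_cpow (sub_nonneg.2 hu.2)]
    rfl
  have h := Complex.Gamma_mul_Gamma_eq_betaIntegral (s := a) (t := b) (by simpa) (by simpa)
  rw [hbeta, ← Complex.ofReal_add, Complex.Gamma_ofReal, Complex.Gamma_ofReal,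
    Complex.Gamma_ofReal] at h
  rw [eq_div_iff (Gamma_pos_of_pos (add_pos ha hb)).ne', mul_comm]
  exact_mod_cast h.symm

theorem integral_rpow_mul_sub_rpow {a b c : ℝ} (ha : 0 < a) (hb : 0 < b) (hc : 0 < c) :
    ∫ s in (0 : ℝ)..c, s ^ (a - 1) * (c - s) ^ (b - 1) =
      c ^ (a + b - 1) * (Gamma a * Gamma b / Gamma (a + b)) := by
  have hscale := intervalIntegral.smul_integral_comp_mul_left
    (fun s => s ^ (a - 1) * (c - s) ^ (b - 1)) c (a := 0) (b := 1)
  rw [mul_zero, mul_one] at hscale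
  rw [← hscale, ← integral_rpow_mul_one_sub_rpow ha hb, smul_eq_mul,
    ← intervalIntegral.integral_const_mul, ← intervalIntegral.integral_const_mul]
  refine intervalIntegral.integral_congr fun u hu => ?_
  rw [uIcc_of_le zero_le_one] at hu
  have hcu : c - c * u = c * (1 - u) := by ring
  simp only [hcu, mul_rpow hc.le hu.1, mul_rpow hc.le (sub_nonneg.2 hu.2)]
  rw [show a + b - 1 = 1 + (a - 1) + (b - 1) by ring, rpow_add hc, rpow_add hc, rpow_one]
  ring

theorem integral_pow_mul_sqrt_sub_sq_pow (m k : ℕ) {c : ℝ} (hc : 0 < c) :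
    ∫ t, t ^ (2 * m) * (if 0 ≤ c - t ^ 2 then √(c - t ^ 2) ^ k else 0) =
      c ^ ((m : ℝ) + (k + 1) / 2) *
        (Gamma (m + 1 / 2) * Gamma (k / 2 + 1) / Gamma (m + 1 + (k + 1) / 2)) := by
  set g : ℝ → ℝ := fun t => t ^ (2 * m) * (if 0 ≤ c - t ^ 2 then √(c - t ^ 2) ^ k else 0)
  have ha : (0 : ℝ) < m + 1 / 2 := by positivity
  have hb : (0 : ℝ) < k / 2 + 1 := by positivity
  calc ∫ t, g t
      = ∫ t, g |t| := by simp only [g, pow_mul, sq_abs]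
    _ = 2 * ∫ t in Ioi 0, g t := integral_comp_abs
    _ = 2 * ∫ s in Ioi 0, 1 / 2 * ((Ioc 0 c).indicator
          (fun s => s ^ ((m : ℝ) + 1 / 2 - 1) * (c - s) ^ ((k : ℝ) / 2 + 1 - 1)) s) := by
      rw [← integral_comp_rpow_Ioi g one_half_pos.ne']
      congr 1
      refine setIntegral_congr_fun measurableSet_Ioi fun s (hs : 0 < s) => ?_
      rw [← sqrt_eq_rpow, smul_eq_mul, abs_of_pos one_half_pos]
      simp only [g, pow_mul, sq_sqrt hs.le, indicator, mem_Ioc, hs, true_and, sub_nonneg]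
      split_ifs with hsc
      · rw [sqrt_eq_rpow, ← rpow_natCast _ k, ← rpow_mul (sub_nonneg.2 hsc), ← rpow_natCast s m,
          show (m : ℝ) + 1 / 2 - 1 = 1 / 2 - 1 + m by ring, rpow_add hs,
          show (k : ℝ) / 2 + 1 - 1 = 1 / 2 * k by ring]
        ring
      · simp
    _ = ∫ s in (0 : ℝ)..c, s ^ ((m : ℝ) + 1 / 2 - 1) * (c - s) ^ ((k : ℝ) / 2 + 1 - 1) := by
      rw [integral_const_mul, ← mul_assoc, mul_one_div_cancel two_ne_zero, one_mul,
        intervalIntegral.integral_of_le hc.le, integral_indicator measurableSet_Ioc,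
        Measure.restrict_restrict measurableSet_Ioc, inter_eq_left.2 Ioc_subset_Ioi_self]
    _ = _ := by
      rw [integral_rpow_mul_sub_rpow ha hb hc]
      ring_nf

theorem setIntegral_sum_sq_le_eval_pow_two_mul {k : ℕ} (i : Fin (k + 1)) (m : ℕ) {c : ℝ}
    (hc : 0 < c) :
    ∫ x in {x : Fin (k + 1) → ℝ | ∑ j, x j ^ 2 ≤ c}, x i ^ (2 * m) =
      c ^ m * √c ^ (k + 1) * Gamma (m + 1 / 2) * √π ^ k / Gamma (m + 1 + (k + 1) / 2) := by
  have hpow : c ^ ((m : ℝ) + (k + 1) / 2) = c ^ m * √c ^ (k + 1) := by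
    rw [rpow_add hc, rpow_natCast, sqrt_eq_rpow, ← rpow_natCast _ (k + 1), ← rpow_mul hc.le]
    push_cast
    ring_nf
  have hΓ : Gamma (k / 2 + 1) ≠ 0 := (Gamma_pos_of_pos (by positivity)).ne'
  rw [setIntegral_sum_sq_le_comp_eval i (continuous_pow _) c]
  simp_rw [measureReal_sum_sq_le, Fintype.card_fin, ← mul_assoc]
  rw [integral_mul_const, integral_pow_mul_sqrt_sub_sq_pow m k hc, hpow]
  field_simp

theorem integral_pow_two_mul_scaledBallUnif {R : ℝ} (hR : 0 < R) (m : ℕ) {n : ℕ} (i : Fin n) :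
    ∫ x, x i ^ (2 * m) ∂(scaledBallUnif n R) =
      (n : ℝ) ^ m * R ^ (2 * m) * Gamma (m + 1 / 2) * Gamma (1 + n / 2) /
        (√π * Gamma (m + 1 + n / 2)) := by
  cases n with
  | zero => exact i.elim0
  | succ k =>
    have hc : 0 < ((k + 1 : ℕ) : ℝ) * R ^ 2 := by positivity
    rw [scaledBallUnif, integral_smul_measure, scaledBall,
      setIntegral_sum_sq_le_eval_pow_two_mul i m hc,
      volume_sum_sq_le hc.le, ENNReal.toReal_inv, ENNReal.toReal_ofReal (by positivity),
      smul_eq_mul, Fintype.card_fin, mul_pow, ← pow_mul, mul_comm 2 m]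
    have hsqrt_c := (sqrt_pos.2 hc).ne'
    have hsqrt_π := (sqrt_pos.2 pi_pos).ne'
    have hΓ₁ := (Gamma_pos_of_pos (by positivity : (0 : ℝ) < (k + 1 : ℕ) / 2 + 1)).ne'
    have hΓ₂ := (Gamma_pos_of_pos (by positivity : (0 : ℝ) < m + 1 + (k + 1 : ℕ) / 2)).ne'
    push_cast at *
    field_simp
    ring_nf

theorem integral_eq_zero_of_odd {f : ℝ → ℝ} (hf : Function.Odd f) : ∫ t, f t = 0 := by
  have h := integral_neg_eq_self f volume
  simp only [hf _, integral_neg] at h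
  linarith

theorem integral_pow_scaledBallUnif_of_odd {p : ℕ} (hp : Odd p) (R : ℝ) {n : ℕ} (i : Fin n) :
    ∫ x, x i ^ p ∂(scaledBallUnif n R) = 0 := by
  cases n with
  | zero => exact i.elim0
  | succ k =>
    rw [scaledBallUnif, integral_smul_measure, scaledBall,
      setIntegral_sum_sq_le_comp_eval i (continuous_pow p), integral_eq_zero_of_odd, smul_zero]
    intro t
    simp only [hp.neg_pow, neg_sq, neg_mul]

open scoped Nat

theorem Gamma_add_nat_eq_prod_mul {x : ℝ} (hx : ∀ j : ℕ, x + j ≠ 0) (m : ℕ) :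
    Gamma (x + m) = (∏ j ∈ Finset.range m, (x + j)) * Gamma x := by
  induction m with
  | zero => simp
  | succ m ih =>
    rw [Nat.cast_succ, ← add_assoc, Gamma_add_one (hx m), ih, Finset.prod_range_succ]
    ring

theorem pow_mul_Gamma_div_eq_doubleFactorial_mul_prod (m : ℕ) {x : ℝ} (hx : 0 ≤ x) :
    x ^ m * Gamma (m + 1 / 2) * Gamma (1 + x / 2) / (√π * Gamma (m + 1 + x / 2)) =
      (2 * m - 1)‼ * ∏ j ∈ Finset.range m, x / (x + (2 * j + 2)) := by
  have hprod : ∏ j ∈ Finset.range m, (x + (2 * j + 2)) =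
      2 ^ m * ∏ j ∈ Finset.range m, (1 + x / 2 + j) := by
    rw [← Finset.card_range m, ← Finset.prod_const, Finset.card_range, ← Finset.prod_mul_distrib]
    exact Finset.prod_congr rfl fun j _ => by ring
  have hΓ := (Gamma_pos_of_pos (by positivity : 0 < 1 + x / 2)).ne'
  have hP : ∏ j ∈ Finset.range m, (1 + x / 2 + j) ≠ 0 :=
    Finset.prod_ne_zero_iff.2 fun j _ => by positivity
  rw [Gamma_nat_add_half, show (m : ℝ) + 1 + x / 2 = 1 + x / 2 + m by ring,
    Gamma_add_nat_eq_prod_mul (fun j => by positivity) m, Finset.prod_div_distrib,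
    Finset.prod_const, Finset.card_range, hprod]
  have hsqrt_π := (sqrt_pos.2 pi_pos).ne'
  field_simp

theorem tendsto_integral_pow_two_mul_scaledBallUnif {R : ℝ} (hR : 0 < R) (m : ℕ) :
    Tendsto (fun n : ℕ => ∫ x, x 0 ^ (2 * m) ∂(scaledBallUnif (n + 1) R)) atTop
      (nhds ((2 * m - 1)‼ * R ^ (2 * m))) := by
  have hprod : Tendsto (fun n : ℕ => ∏ j ∈ Finset.range m,
      ((n + 1 : ℕ) : ℝ) / ((n + 1 : ℕ) + (2 * j + 2))) atTop (nhds 1) := by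
    simpa using tendsto_finsetProd (Finset.range m) fun j _ =>
      (tendsto_natCast_div_add_atTop (2 * j + 2 : ℝ)).comp (tendsto_add_atTop_nat 1)
  have hlim := (hprod.const_mul ((2 * m - 1)‼ : ℝ)).mul_const (R ^ (2 * m))
  rw [mul_one] at hlim
  refine hlim.congr fun n => ?_
  rw [integral_pow_two_mul_scaledBallUnif hR,
    ← pow_mul_Gamma_div_eq_doubleFactorial_mul_prod m (Nat.cast_nonneg _)]
  ring

/-- formulas (8.28)–(8.29): under the uniform measure on the ball
`∑ x_k² ≤ n R²`, `E[x₁^{2m}] = nᵐ R^{2m} Γ(m+1/2) Γ(1+n/2)/(√π Γ(m+1+n/2))`,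
`E[x₁^{2m}] → (2m-1)!! R^{2m}` as `n → ∞`, and all odd moments vanish. -/
theorem stmt15 (R : ℝ) (hR : 0 < R) (m : ℕ) :
    (∀ (n : ℕ) (_hn : 1 ≤ n),
      (∫ x, (x ⟨0, by omega⟩) ^ (2 * m) ∂(scaledBallUnif n R)) =
        (n : ℝ) ^ m * R ^ (2 * m) * Real.Gamma ((m : ℝ) + 1 / 2) *
          Real.Gamma (1 + (n : ℝ) / 2) /
          (Real.sqrt π * Real.Gamma ((m : ℝ) + 1 + (n : ℝ) / 2))) ∧
    Tendsto (fun n : ℕ => ∫ x, (x 0) ^ (2 * m) ∂(scaledBallUnif (n + 1) R))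
      atTop (nhds ((Nat.doubleFactorial (2 * m - 1) : ℝ) * R ^ (2 * m))) ∧
    (∀ (n : ℕ) (_hn : 1 ≤ n),
      (∫ x, (x ⟨0, by omega⟩) ^ (2 * m + 1) ∂(scaledBallUnif n R)) = 0) :=
  ⟨fun _ _ => integral_pow_two_mul_scaledBallUnif hR m _,
    tendsto_integral_pow_two_mul_scaledBallUnif hR m,
    fun _ _ => integral_pow_scaledBallUnif_of_odd (odd_two_mul_add_one m) R _⟩
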